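/- Let the index set {1,…,p} be partitioned into g nonempty groups G_1,…,G_g, with q_l the cardinality of G_l. Fix θ ∈ ℝ^p such that for each group l the subvector θ_{G_l} is nonzero, fix λ > 0 and a positive integer n_e, and let (e_{ij})_{1≤i≤n_e, 1≤j≤p} be a jointly independent family of real Gaussian random variables where e_{ij} ~ N(0, λ√(q_l)/‖θ_{G_l}‖₂) when j ∈ G_l. Then the PANDA expected penalty satisfies E[ ∑_{i=1}^{n_e} ( ∑_{j=1}^p θ_j e_{ij} )² ] = λ n_e ∑_{l=1}^g √(q_l) ‖θ_{G_l}‖₂, i.e. the group-lasso penalty. -/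

import Mathlib

open MeasureTheory ProbabilityTheory Finset
open scoped ProbabilityTheory NNReal

/-!
Expanding each square, the cross terms vanish because the noise coordinates are independent
and centred, so row `i` contributes `∑ⱼ θⱼ² vⱼ`. Grouping the coordinates by `G`, group `l`
contributes `λ √q_l ‖θ_{G_l}‖² / ‖θ_{G_l}‖ = λ √q_l ‖θ_{G_l}‖`.
-/

namespace ProbabilityTheory

variable {Ω : Type*} {mΩ : MeasurableSpace Ω} {P : Measure Ω}

lemma hasLaw_of_map_eq {𝓧 : Type*} {m𝓧 : MeasurableSpace 𝓧} {X : Ω → 𝓧} {μ : Measure 𝓧}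
    [NeZero μ] (h : P.map X = μ) : HasLaw X μ P :=
  ⟨.of_map_ne_zero (h ▸ NeZero.ne μ), h⟩

lemma integral_sq_sum_mul_of_pairwise_indepFun [IsFiniteMeasure P] {ι : Type*} [Fintype ι]
    {X : ι → Ω → ℝ} (hX : ∀ i, MemLp (X i) 2 P) (hmean : ∀ i, P[X i] = 0)
    (hindep : Pairwise fun i j => X i ⟂ᵢ[P] X j) (θ : ι → ℝ) :
    ∫ ω, (∑ i, θ i * X i ω) ^ 2 ∂P = ∑ i, θ i ^ 2 * Var[X i; P] := by
  have hθX : ∀ i, MemLp (fun ω => θ i * X i ω) 2 P := fun i => (hX i).const_mul (θ i)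
  have hsum : (fun ω => ∑ i, θ i * X i ω) = ∑ i, fun ω => θ i * X i ω := by
    ext ω; simp
  have hcentred : P[fun ω => ∑ i, θ i * X i ω] = 0 := by
    rw [integral_finsetSum _ fun i _ => (hθX i).integrable one_le_two]
    simp [integral_const_mul, hmean]
  rw [← variance_of_integral_eq_zero (memLp_finsetSum _ fun i _ => hθX i).aemeasurable hcentred,
    hsum, IndepFun.variance_sum (fun i _ => hθX i)
      fun i _ j _ hij => (hindep hij).comp (measurable_const_mul (θ i)) (measurable_const_mul (θ j))]
  simp [variance_const_mul]

lemma HasLaw.memLp_two_of_gaussianReal {X : Ω → ℝ} {m : ℝ} {v : ℝ≥0}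
    (hX : HasLaw X (gaussianReal m v) P) : MemLp X 2 P :=
  hX.hasGaussianLaw.memLp_two

lemma HasLaw.integral_eq_of_gaussianReal {X : Ω → ℝ} {m : ℝ} {v : ℝ≥0}
    (hX : HasLaw X (gaussianReal m v) P) : P[X] = m :=
  hX.integral_eq.trans integral_id_gaussianReal

lemma HasLaw.variance_eq_of_gaussianReal {X : Ω → ℝ} {m : ℝ} {v : ℝ≥0}
    (hX : HasLaw X (gaussianReal m v) P) : Var[X; P] = v :=
  hX.variance_eq.trans variance_id_gaussianReal

end ProbabilityTheory

lemma sum_sq_mul_div_sqrt_sum_fiberwise {ι κ : Type*} [Fintype ι] [Fintype κ] [DecidableEq κ]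
    (G : ι → κ) (θ : ι → ℝ) (c : κ → ℝ) :
    ∑ j, θ j ^ 2 * (c (G j) / √(∑ k with G k = G j, θ k ^ 2))
      = ∑ l, c l * √(∑ k with G k = l, θ k ^ 2) := by
  rw [← sum_fiberwise univ G]
  refine sum_congr rfl fun l _ => ?_
  -- `Real.div_sqrt` holds also when the group is zero, thanks to `0 / 0 = 0`.
  rw [sum_congr rfl fun j hj => by rw [(mem_filter.mp hj).2], ← sum_mul, mul_div_left_comm,
    Real.div_sqrt, mul_comm]

theorem stmt_7_general {Ω : Type*} [MeasureSpace Ω] [IsProbabilityMeasure (ℙ : Measure Ω)]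
    {p g nE : ℕ}
    (G : Fin p → Fin g)
    (θ : Fin p → ℝ) (lam : ℝ)
    (q : Fin g → ℕ)
    (nrm : Fin g → ℝ)
    (hnrm : ∀ l, nrm l
      = Real.sqrt (∑ j ∈ Finset.univ.filter (fun j => G j = l), (θ j) ^ 2))
    (e : Fin nE → Fin p → Ω → ℝ)
    (hindep : iIndepFun
      (fun ij : Fin nE × Fin p => e ij.1 ij.2) ℙ)
    (v : Fin p → ℝ≥0)
    (hv : ∀ j, (v j : ℝ) = lam * Real.sqrt (q (G j)) / nrm (G j))
    (hgauss : ∀ i j, Measure.map (e i j) ℙ = gaussianReal 0 (v j)) :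
    (∫ ω, ∑ i, (∑ j, θ j * e i j ω) ^ 2 ∂ℙ)
      = lam * nE * ∑ l, Real.sqrt (q l) * nrm l := by
  have hlaw : ∀ i j, HasLaw (e i j) (gaussianReal 0 (v j)) ℙ :=
    fun i j => hasLaw_of_map_eq (hgauss i j)
  have hmemLp : ∀ i j, MemLp (e i j) 2 ℙ := fun i j => (hlaw i j).memLp_two_of_gaussianReal
  have hrow : ∀ i, ∫ ω, (∑ j, θ j * e i j ω) ^ 2 ∂ℙ = ∑ j, θ j ^ 2 * (v j : ℝ) := fun i => by
    rw [integral_sq_sum_mul_of_pairwise_indepFun (hmemLp i)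
      (fun j => (hlaw i j).integral_eq_of_gaussianReal)
      (fun j k hjk => hindep.indepFun (i := (i, j)) (j := (i, k)) (by simpa using hjk))]
    simp only [(hlaw i _).variance_eq_of_gaussianReal]
  rw [integral_finsetSum _ fun i _ =>
      (memLp_finsetSum _ fun j _ => (hmemLp i j).const_mul (θ j)).integrable_sq]
  simp only [hrow, sum_const, card_univ, Fintype.card_fin, nsmul_eq_mul, hv, hnrm]
  rw [sum_sq_mul_div_sqrt_sum_fiberwise G θ fun l => lam * √(q l)]
  simp only [mul_assoc, ← mul_sum]
  ring

/-- Group-lasso row of Table 1: with noise variance λ√(q_l)/‖θ_{G_l}‖₂ for every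
coordinate in group l, the expected PANDA penalty is the group-lasso penalty
λ n_e ∑_l √(q_l) ‖θ_{G_l}‖₂. -/
theorem stmt_7 {Ω : Type*} [MeasureSpace Ω] [IsProbabilityMeasure (ℙ : Measure Ω)]
    {p g nE : ℕ} (hnE : 0 < nE)
    (G : Fin p → Fin g) (hG : ∀ l : Fin g, ∃ j, G j = l)
    (θ : Fin p → ℝ) (lam : ℝ) (hlam : 0 < lam)
    (q : Fin g → ℕ) (hq : ∀ l, q l = (Finset.univ.filter (fun j => G j = l)).card)
    (nrm : Fin g → ℝ)
    (hnrm : ∀ l, nrm l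
      = Real.sqrt (∑ j ∈ Finset.univ.filter (fun j => G j = l), (θ j) ^ 2))
    (hθ : ∀ l, nrm l ≠ 0)
    (e : Fin nE → Fin p → Ω → ℝ) (hmeas : ∀ i j, Measurable (e i j))
    (hindep : iIndepFun
      (fun ij : Fin nE × Fin p => e ij.1 ij.2) ℙ)
    (v : Fin p → ℝ≥0)
    (hv : ∀ j, (v j : ℝ) = lam * Real.sqrt (q (G j)) / nrm (G j))
    (hgauss : ∀ i j, Measure.map (e i j) ℙ = gaussianReal 0 (v j)) :
    (∫ ω, ∑ i, (∑ j, θ j * e i j ω) ^ 2 ∂ℙ)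
      = lam * nE * ∑ l, Real.sqrt (q l) * nrm l :=
  stmt_7_general G θ lam q nrm hnrm e hindep v hv hgauss
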